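/- Consider the preconditioned Fletcher–Reeves nonlinear CG iteration for a differentiable E : ℝⁿ → ℝ with symmetric positive definite preconditioner M, with nonzero gradients g^(k) = ∇E(f^(k)) at every iterate. Assume E is bounded below on ℝⁿ, ∇E is Lipschitz continuous on ℝⁿ, there exists γ̄ > 0 with ‖g^(k)‖_{M⁻¹} ≤ γ̄ for all k, and every step length α_k satisfies the strong Wolfe conditions with constants 0 < c₁ < c₂ < 1/2. Then liminf_{k→∞} ‖g^(k)‖_{M⁻¹} = 0, i.e., liminf_{k→∞} sqrt(g^(k)ᵀ M⁻¹ g^(k)) = 0. -/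

import Mathlib

/-!
By induction along the Fletcher–Reeves recursion, the strong Wolfe condition with `c₂ < 1/2`
keeps `gₖᵀpₖ` between `-Tₖ/(1-c₂)` and `-(1-2c₂)/(1-c₂)·Tₖ`, where `Tₖ = gₖᵀM⁻¹gₖ` (Al-Baali),
so every `pₖ` is a descent direction. Zoutendijk's argument (Armijo condition, curvature
condition, Lipschitz gradient, `E` bounded below) then makes `∑ (gₖᵀpₖ)²/‖pₖ‖²` finite.
Expanding `pₖ₊₁ᵀMpₖ₊₁` with the Fletcher–Reeves `β` gives
`pₖᵀMpₖ/Tₖ² ≤ (1+c₂)/(1-c₂) ∑_{j ≤ k} 1/T_j`. If the `Tₖ` stayed above some `t > 0`, this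
would grow at most linearly in `k`, and the Zoutendijk terms would dominate a multiple of
`1/(k+1)`: the harmonic series would converge.
-/

open Matrix Finset Filter Metric

theorem fletcherReeves_descent_bounds {T d e : ℕ → ℝ} {c₂ : ℝ} (hc₂₀ : 0 ≤ c₂) (hc₂₁ : c₂ < 1)
    (hT : ∀ k, 0 < T k) (hd₀ : d 0 = -T 0)
    (hd : ∀ k, d (k + 1) = -T (k + 1) + T (k + 1) / T k * e k)
    (he : ∀ k, |e k| ≤ c₂ * |d k|) (k : ℕ) :
    -(T k / (1 - c₂)) ≤ d k ∧ d k ≤ -((1 - 2 * c₂) / (1 - c₂) * T k) := by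
  have h1c₂ : 0 < 1 - c₂ := sub_pos.2 hc₂₁
  suffices |d k + T k| ≤ c₂ / (1 - c₂) * T k by
    obtain ⟨hlo, hhi⟩ := abs_le.1 this
    constructor
    · calc -(T k / (1 - c₂)) = -(c₂ / (1 - c₂) * T k) - T k := by field_simp; ring
        _ ≤ d k := by linarith
    · calc d k ≤ c₂ / (1 - c₂) * T k - T k := by linarith
        _ = _ := by field_simp; ring
  induction k with
  | zero => rw [hd₀, neg_add_cancel, abs_zero]; have := hT 0; positivity
  | succ k ih =>
    have hdk : |d k| ≤ T k / (1 - c₂) := by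
      calc |d k| ≤ |d k + T k| + |T k| := by simpa using abs_sub (d k + T k) (T k)
        _ ≤ c₂ / (1 - c₂) * T k + T k := by rw [abs_of_pos (hT k)]; linarith
        _ = T k / (1 - c₂) := by field_simp; ring
    have hβ : 0 ≤ T (k + 1) / T k := (div_pos (hT (k + 1)) (hT k)).le
    calc |d (k + 1) + T (k + 1)| = T (k + 1) / T k * |e k| := by
          rw [hd k, neg_add_cancel_comm, abs_mul, abs_of_nonneg hβ]
      _ ≤ T (k + 1) / T k * (c₂ * (T k / (1 - c₂))) := by gcongr; exact (he k).trans (by gcongr)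
      _ = c₂ / (1 - c₂) * T (k + 1) := by field_simp [(hT k).ne']

theorem div_sq_le_sum_inv_of_fletcherReeves {T e m : ℕ → ℝ} {σ : ℝ} (hσ : 0 ≤ σ)
    (hT : ∀ k, 0 < T k) (he : ∀ k, -(σ * T k) ≤ e k) (hm₀ : m 0 = T 0)
    (hm : ∀ k, m (k + 1) =
      T (k + 1) - 2 * (T (k + 1) / T k) * e k + (T (k + 1) / T k) ^ 2 * m k) (k : ℕ) :
    m k / T k ^ 2 ≤ (1 + 2 * σ) * ∑ j ∈ range (k + 1), 1 / T j := by
  induction k with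
  | zero =>
    have hT₀ := hT 0
    calc m 0 / T 0 ^ 2 = 1 * (1 / T 0) := by rw [hm₀]; field_simp
      _ ≤ (1 + 2 * σ) * ∑ j ∈ range 1, 1 / T j := by rw [sum_range_one]; gcongr; linarith
  | succ k ih =>
    have hT₀ := hT k
    have hT₁ := hT (k + 1)
    have hstep : m (k + 1) / T (k + 1) ^ 2 =
        1 / T (k + 1) + 2 * (-e k / T k) / T (k + 1) + m k / T k ^ 2 := by
      rw [hm k]; field_simp; ring
    have hcross : 2 * (-e k / T k) / T (k + 1) ≤ 2 * σ / T (k + 1) := by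
      gcongr
      rw [div_le_iff₀ hT₀]
      linarith [he k]
    rw [hstep, sum_range_succ, mul_add]
    calc _ ≤ 1 / T (k + 1) + 2 * σ / T (k + 1) + (1 + 2 * σ) * ∑ j ∈ range (k + 1), 1 / T j := by
          linarith
      _ = _ := by ring

theorem summable_sq_div_of_wolfe {F α d e N : ℕ → ℝ} {B L c₁ c₂ : ℝ} (hc₁ : 0 < c₁)
    (hc₂₁ : c₂ < 1) (hB : ∀ k, B ≤ F k) (hα : ∀ k, 0 < α k) (hN : ∀ k, 0 < N k)
    (hd : ∀ k, d k < 0) (hdecr : ∀ k, F (k + 1) ≤ F k + c₁ * α k * d k)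
    (hcurv : ∀ k, c₂ * d k ≤ e k) (hlip : ∀ k, e k - d k ≤ L * α k * N k) :
    Summable fun k => d k ^ 2 / N k := by
  have h1c₂ : 0 < 1 - c₂ := sub_pos.2 hc₂₁
  have hα_lb : ∀ k, (1 - c₂) * -d k ≤ L * α k * N k := fun k => by linarith [hcurv k, hlip k]
  have hL : 0 < L := by
    have := (mul_pos h1c₂ (neg_pos.2 (hd 0))).trans_le (hα_lb 0)
    exact pos_of_mul_pos_left (pos_of_mul_pos_left this (hN 0).le) (hα 0).le
  set κ := c₁ * (1 - c₂) / L
  have hstep : ∀ k, κ * (d k ^ 2 / N k) ≤ F k - F (k + 1) := fun k => by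
    have hN₀ := hN k
    have h : (1 - c₂) * d k ^ 2 ≤ α k * -d k * (L * N k) := by
      nlinarith [mul_le_mul_of_nonneg_right (hα_lb k) (neg_pos.2 (hd k)).le]
    calc κ * (d k ^ 2 / N k) = c₁ * ((1 - c₂) * d k ^ 2) / (L * N k) := by ring
      _ ≤ c₁ * (α k * -d k) := by
          rw [div_le_iff₀ (by positivity), mul_assoc]
          exact mul_le_mul_of_nonneg_left h hc₁.le
      _ ≤ F k - F (k + 1) := by linarith [hdecr k]
  refine (summable_mul_left_iff (by positivity : κ ≠ 0)).1
    (summable_of_sum_range_le (c := F 0 - B) (fun k => ?_) fun n => ?_)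
  · have := hN k; positivity
  · calc ∑ k ∈ range n, κ * (d k ^ 2 / N k) ≤ ∑ k ∈ range n, (F k - F (k + 1)) :=
          sum_le_sum fun k _ => hstep k
      _ = F 0 - F n := sum_range_sub' F n
      _ ≤ F 0 - B := by linarith [hB n]

theorem not_summable_sq_div_of_le_sum_inv {T d m N : ℕ → ℝ} {c K θ t : ℝ} (hc : 0 < c)
    (hK : 0 < K) (hθ : 0 < θ) (ht : 0 < t) (htT : ∀ k, t ≤ T k) (hN : ∀ k, 0 < N k)
    (hdT : ∀ k, c * T k ≤ -d k) (hNm : ∀ k, N k ≤ K * m k)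
    (hmT : ∀ k, m k / T k ^ 2 ≤ θ * ∑ j ∈ range (k + 1), 1 / T j) :
    ¬ Summable fun k => d k ^ 2 / N k := by
  intro hs
  have hharm (k : ℕ) : c ^ 2 * t / (K * θ) * (1 / ((k + 1 : ℕ) : ℝ)) ≤ d k ^ 2 / N k := by
    have hT := ht.trans_le (htT k)
    have hsum : ∑ j ∈ range (k + 1), 1 / T j ≤ (k + 1 : ℕ) / t := by
      calc ∑ j ∈ range (k + 1), 1 / T j ≤ ∑ j ∈ range (k + 1), 1 / t :=
            sum_le_sum fun j _ => one_div_le_one_div_of_le ht (htT j)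
        _ = _ := by rw [sum_const, card_range, nsmul_eq_mul, mul_one_div]
    have hm : m k ≤ θ * ((k + 1 : ℕ) / t) * T k ^ 2 := by
      rw [← div_le_iff₀ (by positivity)]
      exact (hmT k).trans (mul_le_mul_of_nonneg_left hsum hθ.le)
    calc c ^ 2 * t / (K * θ) * (1 / ((k + 1 : ℕ) : ℝ))
        = (c * T k) ^ 2 / (K * (θ * ((k + 1 : ℕ) / t) * T k ^ 2)) := by field_simp
      _ ≤ d k ^ 2 / N k :=
          div_le_div₀ (sq_nonneg _) (by nlinarith [hdT k, mul_pos hc hT]) (hN k)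
            ((hNm k).trans (by gcongr))
  have := (summable_mul_left_iff (by positivity : c ^ 2 * t / (K * θ) ≠ 0)).1
    (hs.of_nonneg_of_le (fun k => by positivity) hharm)
  exact Real.not_summable_one_div_natCast ((summable_nat_add_iff 1).1 this)

theorem liminf_eq_zero_of_not_exists_forall_le {u : ℕ → ℝ} {b : ℝ} (hpos : ∀ k, 0 < u k)
    (hb : ∀ k, u k ≤ b) (h : ¬ ∃ s > 0, ∀ k, s ≤ u k) : liminf u atTop = 0 := by
  have hbdd : IsBoundedUnder (· ≥ ·) atTop u := isBoundedUnder_of ⟨0, fun k => (hpos k).le⟩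
  refine le_antisymm ?_ (le_liminf_of_le (isBoundedUnder_of ⟨b, hb⟩).isCoboundedUnder_ge
    (.of_forall fun k => (hpos k).le))
  by_contra! hL
  obtain ⟨K, hK⟩ := eventually_atTop.1 (eventually_lt_of_lt_liminf (half_lt_self hL) hbdd)
  obtain ⟨j, -, hj⟩ := (range (K + 1)).exists_min_image u nonempty_range_add_one
  refine h ⟨min (liminf u atTop / 2) (u j), lt_min (half_pos hL) (hpos j), fun k => ?_⟩
  rcases le_total k K with hk | hk
  · exact (min_le_right _ _).trans (hj k (mem_range.2 (Nat.lt_succ_of_le hk)))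
  · exact (min_le_left _ _).trans (hK k hk).le

theorem Matrix.PosDef.exists_sq_norm_le_mul_dotProduct_mulVec {ι : Type*} [Fintype ι]
    {M : Matrix ι ι ℝ} (hM : M.PosDef) :
    ∃ K, 0 < K ∧ ∀ v : ι → ℝ, ‖v‖ ^ 2 ≤ K * (v ⬝ᵥ M *ᵥ v) := by
  have hq : ∀ v ≠ 0, 0 < v ⬝ᵥ M *ᵥ v := fun v hv => by simpa using hM.dotProduct_mulVec_pos hv
  have hcont : ContinuousOn (fun v : ι → ℝ => (v ⬝ᵥ M *ᵥ v)⁻¹) (sphere 0 1) :=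
    ((continuous_id.dotProduct (continuous_const.matrix_mulVec continuous_id)).continuousOn).inv₀
      fun v hv => (hq v (ne_zero_of_mem_unit_sphere ⟨v, hv⟩)).ne'
  obtain ⟨C, hC⟩ := (isCompact_sphere (0 : ι → ℝ) 1).exists_bound_of_continuousOn hcont
  refine ⟨max C 1, by positivity, fun v => ?_⟩
  rcases eq_or_ne v 0 with rfl | hv
  · simp
  have hv' : 0 < ‖v‖ := norm_pos_iff.mpr hv
  have hw : ‖v‖⁻¹ • v ∈ sphere (0 : ι → ℝ) 1 := by simp [norm_smul, hv'.ne']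
  have hqw : (‖v‖⁻¹ • v) ⬝ᵥ M *ᵥ (‖v‖⁻¹ • v) = (v ⬝ᵥ M *ᵥ v) / ‖v‖ ^ 2 := by
    simp only [mulVec_smul, dotProduct_smul, smul_dotProduct, smul_eq_mul]; field_simp
  have := hC _ hw
  rw [hqw, norm_inv, Real.norm_of_nonneg (by have := hq v hv; positivity), inv_div,
    div_le_iff₀ (hq v hv)] at this
  nlinarith [le_max_left C 1, hq v hv]

theorem dotProduct_le_card_mul_norm_mul_norm {ι : Type*} [Fintype ι] (a b : ι → ℝ) :
    a ⬝ᵥ b ≤ Fintype.card ι * (‖a‖ * ‖b‖) := by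
  calc a ⬝ᵥ b ≤ ∑ _i : ι, ‖a‖ * ‖b‖ := sum_le_sum fun i _ => (le_abs_self _).trans <| by
        rw [abs_mul]
        exact mul_le_mul (norm_le_pi_norm a i) (norm_le_pi_norm b i) (abs_nonneg _) (norm_nonneg _)
    _ = _ := by rw [sum_const, card_univ, nsmul_eq_mul]

theorem Matrix.PosDef.mulVec_inv_mulVec {ι : Type*} [Fintype ι] [DecidableEq ι]
    {M : Matrix ι ι ℝ} (hM : M.PosDef) (v : ι → ℝ) : M *ᵥ (M⁻¹ *ᵥ v) = v := by
  rw [mulVec_mulVec, mul_nonsing_inv M ((isUnit_iff_isUnit_det M).1 hM.isUnit), one_mulVec]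

theorem Matrix.PosDef.inv_mulVec_dotProduct_mulVec {ι : Type*} [Fintype ι] [DecidableEq ι]
    {M : Matrix ι ι ℝ} (hM : M.PosDef) (a b : ι → ℝ) : M⁻¹ *ᵥ a ⬝ᵥ M *ᵥ b = a ⬝ᵥ b := by
  rw [dotProduct_mulVec, ← mulVec_transpose, (isHermitian_iff_isSymm.1 hM.isHermitian).eq,
    hM.mulVec_inv_mulVec]

theorem Matrix.PosDef.neg_inv_mulVec_add_smul_dotProduct_mulVec {ι : Type*} [Fintype ι]
    [DecidableEq ι] {M : Matrix ι ι ℝ} (hM : M.PosDef) (g p : ι → ℝ) (β : ℝ) :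
    (-(M⁻¹ *ᵥ g) + β • p) ⬝ᵥ M *ᵥ (-(M⁻¹ *ᵥ g) + β • p) =
      g ⬝ᵥ M⁻¹ *ᵥ g - 2 * β * (g ⬝ᵥ p) + β ^ 2 * (p ⬝ᵥ M *ᵥ p) := by
  have hp : p ⬝ᵥ M *ᵥ (M⁻¹ *ᵥ g) = g ⬝ᵥ p := by rw [hM.mulVec_inv_mulVec, dotProduct_comm]
  simp only [mulVec_add, mulVec_neg, mulVec_smul, dotProduct_add, add_dotProduct, dotProduct_neg,
    neg_dotProduct, dotProduct_smul, smul_dotProduct, smul_eq_mul,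
    hM.inv_mulVec_dotProduct_mulVec, hp]
  rw [dotProduct_comm g (M⁻¹ *ᵥ g)]
  ring

theorem summable_sq_dotProduct_div_sq_norm_of_wolfe {ι : Type*} [Fintype ι]
    {E : (ι → ℝ) → ℝ} {grad : (ι → ℝ) → ι → ℝ} {f p : ℕ → ι → ℝ} {α : ℕ → ℝ}
    {B C c₁ c₂ : ℝ} (hc₁ : 0 < c₁) (hc₂₁ : c₂ < 1) (hB : ∀ x, B ≤ E x)
    (hLip : ∀ x y, ‖grad y - grad x‖ ≤ C * ‖y - x‖) (hα : ∀ k, 0 < α k)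
    (hf : ∀ k, f (k + 1) = f k + α k • p k) (hdesc : ∀ k, grad (f k) ⬝ᵥ p k < 0)
    (harmijo : ∀ k, E (f k + α k • p k) ≤ E (f k) + c₁ * α k * (grad (f k) ⬝ᵥ p k))
    (hcurv : ∀ k, c₂ * (grad (f k) ⬝ᵥ p k) ≤ grad (f k + α k • p k) ⬝ᵥ p k) :
    Summable fun k => (grad (f k) ⬝ᵥ p k) ^ 2 / ‖p k‖ ^ 2 := by
  refine summable_sq_div_of_wolfe (F := fun k => E (f k)) (L := Fintype.card ι * C) hc₁ hc₂₁
    (fun k => hB _) hα (fun k => ?_) hdesc (fun k => hf k ▸ harmijo k) hcurv fun k => ?_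
  · exact pow_pos (norm_pos_iff.2 fun h => by simpa [h] using hdesc k) 2
  · calc grad (f k + α k • p k) ⬝ᵥ p k - grad (f k) ⬝ᵥ p k
        = (grad (f k + α k • p k) - grad (f k)) ⬝ᵥ p k := (sub_dotProduct _ _ _).symm
      _ ≤ Fintype.card ι * (‖grad (f k + α k • p k) - grad (f k)‖ * ‖p k‖) :=
          dotProduct_le_card_mul_norm_mul_norm _ _
      _ ≤ Fintype.card ι * (C * ‖α k • p k‖ * ‖p k‖) := by
          gcongr
          simpa using hLip (f k) (f k + α k • p k)
      _ = Fintype.card ι * C * α k * ‖p k‖ ^ 2 := by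
          rw [norm_smul, Real.norm_of_nonneg (hα k).le]; ring

structure IsPrecondFletcherReeves {ι : Type*} [Fintype ι] [DecidableEq ι] (M : Matrix ι ι ℝ)
    (grad : (ι → ℝ) → ι → ℝ) (f p : ℕ → ι → ℝ) (α : ℕ → ℝ) : Prop where
  dir_zero : p 0 = -(M⁻¹ *ᵥ grad (f 0))
  iterate_succ : ∀ k, f (k + 1) = f k + α k • p k
  dir_succ : ∀ k, p (k + 1) = -(M⁻¹ *ᵥ grad (f (k + 1))) +
    (grad (f (k + 1)) ⬝ᵥ M⁻¹ *ᵥ grad (f (k + 1)) / (grad (f k) ⬝ᵥ M⁻¹ *ᵥ grad (f k))) • p k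

namespace IsPrecondFletcherReeves

variable {ι : Type*} [Fintype ι] [DecidableEq ι] {M : Matrix ι ι ℝ} {grad : (ι → ℝ) → ι → ℝ}
  {f p : ℕ → ι → ℝ} {α : ℕ → ℝ} {c₂ : ℝ}

theorem descent_bounds (hFR : IsPrecondFletcherReeves M grad f p α) (hc₂₀ : 0 ≤ c₂)
    (hc₂₁ : c₂ < 1) (hT : ∀ k, 0 < grad (f k) ⬝ᵥ M⁻¹ *ᵥ grad (f k))
    (hWolfe : ∀ k, |grad (f k + α k • p k) ⬝ᵥ p k| ≤ c₂ * |grad (f k) ⬝ᵥ p k|) (k : ℕ) :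
    -(grad (f k) ⬝ᵥ M⁻¹ *ᵥ grad (f k) / (1 - c₂)) ≤ grad (f k) ⬝ᵥ p k ∧
      grad (f k) ⬝ᵥ p k ≤ -((1 - 2 * c₂) / (1 - c₂) * (grad (f k) ⬝ᵥ M⁻¹ *ᵥ grad (f k))) :=
  fletcherReeves_descent_bounds hc₂₀ hc₂₁ hT (by rw [hFR.dir_zero, dotProduct_neg])
    (fun k => by rw [hFR.dir_succ, dotProduct_add, dotProduct_neg, dotProduct_smul, smul_eq_mul])
    (fun k => hFR.iterate_succ k ▸ hWolfe k) k

theorem dotProduct_mulVec_div_sq_le_sum_inv (hFR : IsPrecondFletcherReeves M grad f p α)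
    (hM : M.PosDef) (hc₂₀ : 0 ≤ c₂) (hc₂₁ : c₂ < 1) (hT : ∀ k, 0 < grad (f k) ⬝ᵥ M⁻¹ *ᵥ grad (f k))
    (hWolfe : ∀ k, |grad (f k + α k • p k) ⬝ᵥ p k| ≤ c₂ * |grad (f k) ⬝ᵥ p k|) (k : ℕ) :
    p k ⬝ᵥ M *ᵥ p k / (grad (f k) ⬝ᵥ M⁻¹ *ᵥ grad (f k)) ^ 2 ≤
      (1 + c₂) / (1 - c₂) * ∑ j ∈ range (k + 1), 1 / (grad (f j) ⬝ᵥ M⁻¹ *ᵥ grad (f j)) := by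
  have h1c₂ : 0 < 1 - c₂ := sub_pos.2 hc₂₁
  have hθ : (1 + c₂) / (1 - c₂) = 1 + 2 * (c₂ / (1 - c₂)) := by field_simp; ring
  rw [hθ]
  refine div_sq_le_sum_inv_of_fletcherReeves (σ := c₂ / (1 - c₂))
    (e := fun k => grad (f (k + 1)) ⬝ᵥ p k) (m := fun k => p k ⬝ᵥ M *ᵥ p k) (by positivity) hT
    (fun k => ?_) ?_ (fun k => ?_) k
  · have hd : |grad (f k) ⬝ᵥ p k| ≤ grad (f k) ⬝ᵥ M⁻¹ *ᵥ grad (f k) / (1 - c₂) := by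
      obtain ⟨hlo, hhi⟩ := hFR.descent_bounds hc₂₀ hc₂₁ hT hWolfe k
      refine abs_le.2 ⟨hlo, hhi.trans ?_⟩
      rw [← sub_nonneg]; field_simp; nlinarith [hT k]
    rw [div_mul_eq_mul_div, mul_div_assoc]
    exact neg_le_of_abs_le ((hFR.iterate_succ k ▸ hWolfe k).trans
      (mul_le_mul_of_nonneg_left hd hc₂₀))
  · rw [hFR.dir_zero, mulVec_neg, dotProduct_neg, neg_dotProduct, neg_neg,
      hM.inv_mulVec_dotProduct_mulVec]
  · rw [hFR.dir_succ, hM.neg_inv_mulVec_add_smul_dotProduct_mulVec]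

end IsPrecondFletcherReeves

theorem pcg_global_convergence_general
    (n : ℕ)
    (E : (Fin n → ℝ) → ℝ) (gradE : (Fin n → ℝ) → (Fin n → ℝ))
    (B : ℝ) (hbdd : ∀ x, B ≤ E x)
    (C : ℝ)
    (hLip : ∀ x y, ‖gradE y - gradE x‖ ≤ C * ‖y - x‖)
    (M : Matrix (Fin n) (Fin n) ℝ) (hM : M.PosDef)
    (f p : ℕ → (Fin n → ℝ)) (α : ℕ → ℝ)
    (c₁ c₂ : ℝ) (hc₁ : 0 < c₁) (hc₁₂ : c₁ < c₂) (hc₂ : c₂ < 1 / 2)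
    (hgne : ∀ k, gradE (f k) ≠ 0)
    (γbar : ℝ)
    (hgbd : ∀ k, Real.sqrt (gradE (f k) ⬝ᵥ M⁻¹.mulVec (gradE (f k))) ≤ γbar)
    (hα : ∀ k, 0 < α k)
    (hp0 : p 0 = -(M⁻¹.mulVec (gradE (f 0))))
    (hf : ∀ k, f (k + 1) = f k + α k • p k)
    (hpk : ∀ k, p (k + 1) =
      -(M⁻¹.mulVec (gradE (f (k + 1)))) +
        ((gradE (f (k + 1)) ⬝ᵥ M⁻¹.mulVec (gradE (f (k + 1)))) /
          (gradE (f k) ⬝ᵥ M⁻¹.mulVec (gradE (f k)))) • p k)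
    (hWolfe1 : ∀ k, E (f k + α k • p k) ≤ E (f k) + c₁ * α k * (gradE (f k) ⬝ᵥ p k))
    (hWolfe2 : ∀ k, |gradE (f k + α k • p k) ⬝ᵥ p k| ≤ c₂ * |gradE (f k) ⬝ᵥ p k|) :
    Filter.liminf
      (fun k : ℕ => Real.sqrt (gradE (f k) ⬝ᵥ M⁻¹.mulVec (gradE (f k))))
      Filter.atTop = 0 := by
  have hc₂₀ : 0 ≤ c₂ := (hc₁.trans hc₁₂).le
  have hc₂₁ : c₂ < 1 := by linarith
  have hc : 0 < (1 - 2 * c₂) / (1 - c₂) := div_pos (by linarith) (by linarith)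
  have hFR : IsPrecondFletcherReeves M gradE f p α := ⟨hp0, hf, hpk⟩
  have hT (k : ℕ) : 0 < gradE (f k) ⬝ᵥ M⁻¹ *ᵥ gradE (f k) := by
    simpa using hM.inv.dotProduct_mulVec_pos (hgne k)
  have hdesc (k : ℕ) := (hFR.descent_bounds hc₂₀ hc₂₁ hT hWolfe2 k).2
  have hneg (k : ℕ) : gradE (f k) ⬝ᵥ p k < 0 :=
    (hdesc k).trans_lt (neg_neg_of_pos (mul_pos hc (hT k)))
  have hZ := summable_sq_dotProduct_div_sq_norm_of_wolfe hc₁ hc₂₁ hbdd hLip hα hf hneg hWolfe1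
    fun k => by simpa [abs_of_neg (hneg k)] using neg_le_of_abs_le (hWolfe2 k)
  refine liminf_eq_zero_of_not_exists_forall_le (fun k => Real.sqrt_pos.2 (hT k)) hgbd ?_
  rintro ⟨s, hs, hsT⟩
  obtain ⟨K, hK, hKM⟩ := hM.exists_sq_norm_le_mul_dotProduct_mulVec
  exact not_summable_sq_div_of_le_sum_inv hc hK (by positivity) (pow_pos hs 2)
    (fun k => (Real.le_sqrt' hs).1 (hsT k))
    (fun k => pow_pos (norm_pos_iff.2 fun h => by simpa [h] using hneg k) 2)
    (fun k => by linarith [hdesc k]) (fun k => hKM (p k))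
    (hFR.dotProduct_mulVec_div_sq_le_sum_inv hM hc₂₀ hc₂₁ hT hWolfe2) hZ

/-- Theorem 5.6 (global convergence of the IEM algorithm): for the
preconditioned Fletcher–Reeves nonlinear CG iteration with `E` bounded below,
`∇E` Lipschitz, the `M⁻¹`-norms of the gradients bounded by `γ̄`, and strong
Wolfe step lengths with `0 < c₁ < c₂ < 1/2`,
`liminf_{k→∞} ‖g⁽ᵏ⁾‖_{M⁻¹} = 0`. -/
theorem pcg_global_convergence
    (n : ℕ) (hn : 1 ≤ n)
    (E : (Fin n → ℝ) → ℝ) (gradE : (Fin n → ℝ) → (Fin n → ℝ))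
    (hdiff : Differentiable ℝ E)
    (hgrad : ∀ x v, fderiv ℝ E x v = gradE x ⬝ᵥ v)
    (B : ℝ) (hbdd : ∀ x, B ≤ E x)
    (C : ℝ) (hC : 0 < C)
    (hLip : ∀ x y, ‖gradE y - gradE x‖ ≤ C * ‖y - x‖)
    (M : Matrix (Fin n) (Fin n) ℝ) (hM : M.PosDef)
    (f p : ℕ → (Fin n → ℝ)) (α : ℕ → ℝ)
    (c₁ c₂ : ℝ) (hc₁ : 0 < c₁) (hc₁₂ : c₁ < c₂) (hc₂ : c₂ < 1 / 2)
    (hgne : ∀ k, gradE (f k) ≠ 0)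
    (γbar : ℝ) (hγbar : 0 < γbar)
    (hgbd : ∀ k, Real.sqrt (gradE (f k) ⬝ᵥ M⁻¹.mulVec (gradE (f k))) ≤ γbar)
    (hα : ∀ k, 0 < α k)
    (hp0 : p 0 = -(M⁻¹.mulVec (gradE (f 0))))
    (hf : ∀ k, f (k + 1) = f k + α k • p k)
    (hpk : ∀ k, p (k + 1) =
      -(M⁻¹.mulVec (gradE (f (k + 1)))) +
        ((gradE (f (k + 1)) ⬝ᵥ M⁻¹.mulVec (gradE (f (k + 1)))) /
          (gradE (f k) ⬝ᵥ M⁻¹.mulVec (gradE (f k)))) • p k)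
    (hWolfe1 : ∀ k, E (f k + α k • p k) ≤ E (f k) + c₁ * α k * (gradE (f k) ⬝ᵥ p k))
    (hWolfe2 : ∀ k, |gradE (f k + α k • p k) ⬝ᵥ p k| ≤ c₂ * |gradE (f k) ⬝ᵥ p k|) :
    Filter.liminf
      (fun k : ℕ => Real.sqrt (gradE (f k) ⬝ᵥ M⁻¹.mulVec (gradE (f k))))
      Filter.atTop = 0 :=
  pcg_global_convergence_general n E gradE B hbdd C hLip M hM f p α c₁ c₂ hc₁ hc₁₂ hc₂ hgne γbar
    hgbd hα hp0 hf hpk hWolfe1 hWolfe2
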